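/- arXiv:2106.04911 — 5 statements merged into one kernel-verified Lean document; each statement's English description precedes it below -/
import Mathlib

section
/- Let $\mathcal{L}_1,\dots,\mathcal{L}_n:\mathbb{R}^d\to\mathbb{R}$ each have $L$-Lipschitz continuous gradient, let $\alpha\in[0,(\sqrt{2}-1)/L)$, define $F_i(w) = \mathcal{L}_i(w-\alpha\nabla\mathcal{L}_i(w))$, $F = \frac{1}{n}\sum_i F_i$, and $\mathcal{L} = \frac{1}{n}\sum_i \mathcal{L}_i$. Suppose $\frac{1}{n}\sum_{i=1}^n\|\nabla\mathcal{L}_i(w)-\nabla\mathcal{L}(w)\|^2 \le \gamma_G^2$ for all $w$. Then for all $w$: $\|\nabla\mathcal{L}(w)\| \le C_1\|\nabla F(w)\| + C_2\gamma_G$, where $C_1 = \frac{1}{1-2\alpha L-\alpha^2 L^2}$ and $C_2 = \frac{2\alpha L + \alpha^2 L^2}{1-2\alpha L - \alpha^2 L^2}$. -/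
/-!
For one task write `g = ∇𝓛ᵢ(w)` and `u = ∇𝓛ᵢ(w - α g)`. The Lipschitz bound gives
`‖g - u‖ ≤ αL‖g‖`, and it also bounds the Hessian by `L`, so the meta-gradient `u - α ∇²𝓛ᵢ(w) u`
is within `c‖g‖` of `g`, where `c = 2αL + α²L² < 1`. Averaging over tasks,
`‖∇𝓛(w) - ∇F(w)‖ ≤ c · mean ‖gᵢ‖`, and `mean ‖gᵢ‖ ≤ ‖∇𝓛(w)‖ + γ_G` by the triangle inequality
and mean ≤ root mean square applied to the dissimilarity bound. Solving for `‖∇𝓛(w)‖` gives the claim.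
-/

open Finset

variable {E : Type*} [NormedAddCommGroup E] [NormedSpace ℝ E]

section Averages

variable {ι : Type*} [Fintype ι]

theorem avg_le_of_avg_sq_le {a : ι → ℝ} {γ : ℝ} (hγ : 0 ≤ γ)
    (h : (Fintype.card ι : ℝ)⁻¹ * ∑ i, a i ^ 2 ≤ γ ^ 2) :
    (Fintype.card ι : ℝ)⁻¹ * ∑ i, a i ≤ γ := by
  have hjensen := sum_div_card_sq_le_sum_sq_div_card (s := univ) (f := a)
  rw [card_univ, div_eq_inv_mul, div_eq_inv_mul] at hjensen
  exact le_of_sq_le_sq (hjensen.trans h) hγ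

theorem norm_avg_sub_avg_le (g m : ι → E) :
    ‖(Fintype.card ι : ℝ)⁻¹ • ∑ i, g i - (Fintype.card ι : ℝ)⁻¹ • ∑ i, m i‖
      ≤ (Fintype.card ι : ℝ)⁻¹ * ∑ i, ‖g i - m i‖ := by
  rw [← smul_sub, ← sum_sub_distrib, norm_smul, norm_inv, Real.norm_natCast]
  gcongr
  exact norm_sum_le _ _

theorem avg_norm_le_norm_avg_add_avg_norm_sub (g : ι → E) :
    (Fintype.card ι : ℝ)⁻¹ * ∑ i, ‖g i‖
      ≤ ‖(Fintype.card ι : ℝ)⁻¹ • ∑ j, g j‖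
        + (Fintype.card ι : ℝ)⁻¹ * ∑ i, ‖g i - (Fintype.card ι : ℝ)⁻¹ • ∑ j, g j‖ := by
  set gbar := (Fintype.card ι : ℝ)⁻¹ • ∑ j, g j
  calc (Fintype.card ι : ℝ)⁻¹ * ∑ i, ‖g i‖
      ≤ (Fintype.card ι : ℝ)⁻¹ * ∑ i, (‖gbar‖ + ‖g i - gbar‖) := by
        gcongr with i
        exact norm_le_norm_add_norm_sub' _ _
    _ = ((Fintype.card ι : ℝ)⁻¹ * Fintype.card ι) * ‖gbar‖
          + (Fintype.card ι : ℝ)⁻¹ * ∑ i, ‖g i - gbar‖ := by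
        rw [sum_add_distrib, sum_const, card_univ, nsmul_eq_mul]
        ring
    _ ≤ ‖gbar‖ + (Fintype.card ι : ℝ)⁻¹ * ∑ i, ‖g i - gbar‖ := by
        gcongr
        exact mul_le_of_le_one_left (norm_nonneg _) inv_mul_le_one

theorem norm_avg_le_of_norm_sub_le {g m : ι → E} {c γ : ℝ} (hc0 : 0 ≤ c) (hc1 : c < 1)
    (hγ : 0 ≤ γ) (hgm : ∀ i, ‖g i - m i‖ ≤ c * ‖g i‖)
    (hdis : (Fintype.card ι : ℝ)⁻¹ * ∑ i, ‖g i - (Fintype.card ι : ℝ)⁻¹ • ∑ j, g j‖ ^ 2 ≤ γ ^ 2) :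
    ‖(Fintype.card ι : ℝ)⁻¹ • ∑ i, g i‖
      ≤ (1 - c)⁻¹ * ‖(Fintype.card ι : ℝ)⁻¹ • ∑ i, m i‖ + c / (1 - c) * γ := by
  set gbar := (Fintype.card ι : ℝ)⁻¹ • ∑ i, g i
  set mbar := (Fintype.card ι : ℝ)⁻¹ • ∑ i, m i
  have hspread := avg_le_of_avg_sq_le hγ hdis
  have havg : (Fintype.card ι : ℝ)⁻¹ * ∑ i, ‖g i‖ ≤ ‖gbar‖ + γ :=
    (avg_norm_le_norm_avg_add_avg_norm_sub g).trans (by gcongr)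
  have hdiff : ‖gbar - mbar‖ ≤ c * (‖gbar‖ + γ) :=
    calc ‖gbar - mbar‖ ≤ (Fintype.card ι : ℝ)⁻¹ * ∑ i, ‖g i - m i‖ := norm_avg_sub_avg_le g m
      _ ≤ (Fintype.card ι : ℝ)⁻¹ * ∑ i, c * ‖g i‖ := by gcongr with i; exact hgm i
      _ = c * ((Fintype.card ι : ℝ)⁻¹ * ∑ i, ‖g i‖) := by rw [← mul_sum]; ring
      _ ≤ c * (‖gbar‖ + γ) := by gcongr
  have hmain : (1 - c) * ‖gbar‖ ≤ ‖mbar‖ + c * γ := by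
    linarith [norm_le_norm_add_norm_sub' gbar mbar]
  rw [div_eq_inv_mul, mul_assoc, ← mul_add]
  exact (le_inv_mul_iff₀ (sub_pos.mpr hc1)).mpr hmain

end Averages

theorem norm_sub_metaGrad_le {f : E → E} {f' : E →L[ℝ] E} {w : E} {L α : ℝ} (hL : 0 ≤ L)
    (hα : 0 ≤ α) (hf : ∀ x y, ‖f x - f y‖ ≤ L * ‖x - y‖) (hf' : HasFDerivAt f f' w) :
    ‖f w - (f (w - α • f w) - α • f' (f (w - α • f w)))‖
      ≤ (2 * α * L + α ^ 2 * L ^ 2) * ‖f w‖ := by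
  set u := f (w - α • f w)
  have hstep : ‖f w - u‖ ≤ α * L * ‖f w‖ := by
    have := hf w (w - α • f w)
    rw [sub_sub_cancel, norm_smul, Real.norm_of_nonneg hα] at this
    linarith
  have hu : ‖u‖ ≤ (1 + α * L) * ‖f w‖ := by
    linarith [norm_le_norm_add_norm_sub' u (f w), norm_sub_rev u (f w)]
  have hf'u : ‖f' u‖ ≤ L * ‖u‖ :=
    (f').le_of_opNorm_le (hf'.le_of_lip' hL (.of_forall fun x => hf x w)) u
  calc ‖f w - (u - α • f' u)‖ = ‖(f w - u) + α • f' u‖ := by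
        rw [sub_sub_eq_add_sub, add_sub_right_comm]
    _ ≤ ‖f w - u‖ + α * ‖f' u‖ :=
        (norm_add_le _ _).trans_eq (by rw [norm_smul, Real.norm_of_nonneg hα])
    _ ≤ α * L * ‖f w‖ + α * (L * ((1 + α * L) * ‖f w‖)) := by
        gcongr
        exact hf'u.trans (by gcongr)
    _ = (2 * α * L + α ^ 2 * L ^ 2) * ‖f w‖ := by ring

theorem two_mul_add_sq_lt_one {x : ℝ} (hx0 : 0 ≤ x) (hx : x < √2 - 1) : 2 * x + x ^ 2 < 1 := by
  have hsq : (1 + x) ^ 2 < √2 ^ 2 := by gcongr; linarith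
  rw [Real.sq_sqrt zero_le_two] at hsq
  linarith

theorem grad_to_meta_general (n d : ℕ) (L α γG : ℝ) (hL : 0 < L) (hγ : 0 ≤ γG)
    (hα0 : 0 ≤ α) (hα : α < (Real.sqrt 2 - 1) / L)
    (grad : Fin n → EuclideanSpace ℝ (Fin d) → EuclideanSpace ℝ (Fin d))
    (hess : Fin n → EuclideanSpace ℝ (Fin d) →
      EuclideanSpace ℝ (Fin d) →L[ℝ] EuclideanSpace ℝ (Fin d))
    (hhess : ∀ i w, HasFDerivAt (grad i) (hess i w) w)
    (hLip : ∀ i w w', ‖grad i w - grad i w'‖ ≤ L * ‖w - w'‖)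
    (hdis : ∀ w : EuclideanSpace ℝ (Fin d),
      (n : ℝ)⁻¹ * ∑ i, ‖grad i w - (n : ℝ)⁻¹ • ∑ j, grad j w‖ ^ 2 ≤ γG ^ 2)
    (w : EuclideanSpace ℝ (Fin d)) :
    ‖(n : ℝ)⁻¹ • ∑ i, grad i w‖
      ≤ (1 - 2 * α * L - α ^ 2 * L ^ 2)⁻¹ *
          ‖(n : ℝ)⁻¹ • ∑ i, (grad i (w - α • grad i w)
              - α • hess i w (grad i (w - α • grad i w)))‖
        + (2 * α * L + α ^ 2 * L ^ 2) / (1 - 2 * α * L - α ^ 2 * L ^ 2) * γG := by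
  have hc1 : 2 * α * L + α ^ 2 * L ^ 2 < 1 := by
    have := two_mul_add_sq_lt_one (mul_nonneg hα0 hL.le) ((lt_div_iff₀ hL).mp hα)
    linarith
  have key := norm_avg_le_of_norm_sub_le (by positivity) hc1 hγ
    (fun i => norm_sub_metaGrad_le hL.le hα0 (hLip i) (hhess i w))
    (by rw [Fintype.card_fin]; exact hdis w)
  rwa [Fintype.card_fin, sub_add_eq_sub_sub] at key

/-- Lemma A.3(i) of Fallah et al.: if each `𝓛ᵢ` has `L`-Lipschitz gradient,
`α ∈ [0, (√2-1)/L)`, and the gradient dissimilarity is bounded by `γG²`, then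
`‖∇𝓛(w)‖ ≤ C₁‖∇F(w)‖ + C₂ γG` where
`∇F(w) = (1/n)∑ᵢ (I - α∇²𝓛ᵢ(w)) ∇𝓛ᵢ(w - α∇𝓛ᵢ(w))`. -/
theorem grad_to_meta (n d : ℕ) (hn : 0 < n) (L α γG : ℝ) (hL : 0 < L) (hγ : 0 ≤ γG)
    (hα0 : 0 ≤ α) (hα : α < (Real.sqrt 2 - 1) / L)
    (𝓛 : Fin n → EuclideanSpace ℝ (Fin d) → ℝ)
    (grad : Fin n → EuclideanSpace ℝ (Fin d) → EuclideanSpace ℝ (Fin d))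
    (hess : Fin n → EuclideanSpace ℝ (Fin d) →
      EuclideanSpace ℝ (Fin d) →L[ℝ] EuclideanSpace ℝ (Fin d))
    (hgrad : ∀ i w, HasGradientAt (𝓛 i) (grad i w) w)
    (hhess : ∀ i w, HasFDerivAt (grad i) (hess i w) w)
    (hLip : ∀ i w w', ‖grad i w - grad i w'‖ ≤ L * ‖w - w'‖)
    (hdis : ∀ w : EuclideanSpace ℝ (Fin d),
      (n : ℝ)⁻¹ * ∑ i, ‖grad i w - (n : ℝ)⁻¹ • ∑ j, grad j w‖ ^ 2 ≤ γG ^ 2)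
    (w : EuclideanSpace ℝ (Fin d)) :
    ‖(n : ℝ)⁻¹ • ∑ i, grad i w‖
      ≤ (1 - 2 * α * L - α ^ 2 * L ^ 2)⁻¹ *
          ‖(n : ℝ)⁻¹ • ∑ i, (grad i (w - α • grad i w)
              - α • hess i w (grad i (w - α • grad i w)))‖
        + (2 * α * L + α ^ 2 * L ^ 2) / (1 - 2 * α * L - α ^ 2 * L ^ 2) * γG :=
  grad_to_meta_general n d L α γG hL hγ hα0 hα grad hess hhess hLip hdis w
end

section
/- Let each $\mathcal{L}_i:\mathbb{R}^d\to\mathbb{R}$ have $L$-Lipschitz gradient and $\rho$-Lipschitz Hessian, let $\alpha\in[0,1/L]$, and set $F(w) = \frac{1}{n}\sum_{i=1}^n \mathcal{L}_i(w-\alpha\nabla\mathcal{L}_i(w))$. Then for all $w, w'\in\mathbb{R}^d$: $F(w') - F(w) - \langle \nabla F(w), w'-w\rangle \le \frac{L(w)}{2}\|w'-w\|^2$, where $L(w) = 4L + \frac{2\rho\alpha}{n}\sum_{i=1}^n \|\nabla\mathcal{L}_i(w)\|$. -/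
/-!
For one task, the chain rule and the symmetry of the Hessian give
`∇(u ↦ 𝓛(u - α∇𝓛(u))) = (I - α∇²𝓛(u)) ∇𝓛(u - α∇𝓛(u))`. Since `αL ≤ 1`, the inner step
`u ↦ u - α∇𝓛(u)` is 2-Lipschitz and `‖∇𝓛(w - α∇𝓛(w))‖ ≤ 2‖∇𝓛(w)‖`, so this gradient moves away
from its value at `w` at rate at most `4L + 2ρα‖∇𝓛(w)‖`. Integrating along the segment from `w` to
`w'` gives the quadratic upper bound for each task, and averaging over the tasks gives the claim.
-/

open Finset InnerProductSpace Set
open scoped RealInnerProductSpace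

theorem sub_le_of_hasDerivAt_le_mul {φ φ' : ℝ → ℝ} {c : ℝ}
    (hφ : ∀ t ∈ Icc (0 : ℝ) 1, HasDerivAt φ (φ' t) t) (hφ' : ∀ t ∈ Ico (0 : ℝ) 1, φ' t ≤ c * t) :
    φ 1 - φ 0 ≤ c / 2 := by
  have hB : ∀ t, HasDerivAt (fun t => φ 0 + c * t ^ 2 / 2) (c * t) t := fun t => by
    simpa using (((hasDerivAt_pow 2 t).const_mul c).div_const 2 |>.const_add (φ 0)).congr_deriv
      (by ring)
  have := image_le_of_deriv_right_le_deriv_boundary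
    (fun t ht => (hφ t ht).continuousAt.continuousWithinAt)
    (fun t ht => (hφ t (Ico_subset_Icc_self ht)).hasDerivWithinAt) (le_of_eq (by simp))
    (fun t _ => (hB t).continuousAt.continuousWithinAt) (fun t _ => (hB t).hasDerivWithinAt) hφ'
    (right_mem_Icc.2 zero_le_one)
  linarith

section NormedSpace

variable {E : Type*} [NormedAddCommGroup E] [NormedSpace ℝ E] {g : E → E} {L α : ℝ}

theorem norm_sub_smul_sub_sub_smul_le (hα : 0 ≤ α) (hg : ∀ u v, ‖g u - g v‖ ≤ L * ‖u - v‖)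
    (u w : E) :
    ‖(u - α • g u) - (w - α • g w)‖ ≤ (1 + α * L) * ‖u - w‖ :=
  calc ‖(u - α • g u) - (w - α • g w)‖ = ‖(u - w) - α • (g u - g w)‖ := by
        rw [smul_sub]; abel_nf
    _ ≤ ‖u - w‖ + α * ‖g u - g w‖ := (norm_sub_le _ _).trans_eq (by rw [norm_smul_of_nonneg hα])
    _ ≤ ‖u - w‖ + α * (L * ‖u - w‖) := by gcongr; exact hg u w
    _ = (1 + α * L) * ‖u - w‖ := by ring

theorem norm_apply_sub_smul_le (hα : 0 ≤ α) (hg : ∀ u v, ‖g u - g v‖ ≤ L * ‖u - v‖) (w : E) :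
    ‖g (w - α • g w)‖ ≤ (1 + α * L) * ‖g w‖ :=
  calc ‖g (w - α • g w)‖ ≤ ‖g w‖ + ‖g (w - α • g w) - g w‖ := norm_le_insert' _ _
    _ ≤ ‖g w‖ + L * ‖(w - α • g w) - w‖ := by gcongr; exact hg _ _
    _ = (1 + α * L) * ‖g w‖ := by
        rw [sub_sub_cancel_left, norm_neg, norm_smul, Real.norm_of_nonneg hα]; ring

theorem norm_sub_smul_apply_sub_le {H : E → E →L[ℝ] E} {ρ : ℝ} (hα : 0 ≤ α) (hαL : α * L ≤ 1)
    (hg : ∀ u v, ‖g u - g v‖ ≤ L * ‖u - v‖) (hH : ∀ u, ‖H u‖ ≤ L)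
    (hHLip : ∀ u v, ‖H u - H v‖ ≤ ρ * ‖u - v‖) (u w : E) :
    ‖(g (u - α • g u) - α • H u (g (u - α • g u)))
        - (g (w - α • g w) - α • H w (g (w - α • g w)))‖
      ≤ (4 * L + 2 * ρ * α * ‖g w‖) * ‖u - w‖ := by
  set a := g (u - α • g u) - g (w - α • g w)
  set b := g (w - α • g w)
  have hL : 0 ≤ L := (norm_nonneg _).trans (hH u)
  have hρ : 0 ≤ ρ * ‖u - w‖ := (norm_nonneg _).trans (hHLip u w)
  have ha : ‖a‖ ≤ 2 * L * ‖u - w‖ :=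
    calc ‖a‖ ≤ L * ((1 + α * L) * ‖u - w‖) :=
          (hg _ _).trans (by gcongr; exact norm_sub_smul_sub_sub_smul_le hα hg u w)
      _ ≤ L * (2 * ‖u - w‖) := by gcongr; linarith
      _ = 2 * L * ‖u - w‖ := by ring
  have hHa : ‖a - α • H u a‖ ≤ 2 * ‖a‖ :=
    calc ‖a - α • H u a‖ ≤ ‖a‖ + α * ‖H u a‖ :=
          (norm_sub_le _ _).trans_eq (by rw [norm_smul_of_nonneg hα])
      _ ≤ ‖a‖ + α * (L * ‖a‖) := by gcongr; exact (H u).le_of_opNorm_le (hH u) a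
      _ ≤ 2 * ‖a‖ := by nlinarith [norm_nonneg a]
  have hHb : ‖(H u - H w) b‖ ≤ ρ * ‖u - w‖ * (2 * ‖g w‖) :=
    calc ‖(H u - H w) b‖ ≤ ρ * ‖u - w‖ * ‖b‖ := (H u - H w).le_of_opNorm_le (hHLip u w) b
      _ ≤ ρ * ‖u - w‖ * (2 * ‖g w‖) := by
          gcongr; exact (norm_apply_sub_smul_le hα hg w).trans (by gcongr; linarith)
  calc _ = ‖(a - α • H u a) - α • (H u - H w) b‖ := by
        congr 1; simp only [a, b, map_sub, sub_apply, smul_sub]; abel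
    _ ≤ ‖a - α • H u a‖ + α * ‖(H u - H w) b‖ :=
        (norm_sub_le _ _).trans_eq (by rw [norm_smul_of_nonneg hα])
    _ ≤ 2 * (2 * L * ‖u - w‖) + α * (ρ * ‖u - w‖ * (2 * ‖g w‖)) := by
        gcongr; exact hHa.trans (by gcongr)
    _ = (4 * L + 2 * ρ * α * ‖g w‖) * ‖u - w‖ := by ring

end NormedSpace

section InnerProductSpace

variable {E : Type*} [NormedAddCommGroup E] [InnerProductSpace ℝ E]

theorem average_sub_sub_inner_le {n : ℕ} (hn : 0 < n) {a b x : Fin n → ℝ} {v : Fin n → E} {h : E}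
    {c c' r : ℝ} (hle : ∀ i, a i - b i - ⟪v i, h⟫ ≤ (c + c' * x i) / 2 * r) :
    (n : ℝ)⁻¹ * ∑ i, a i - (n : ℝ)⁻¹ * ∑ i, b i - ⟪(n : ℝ)⁻¹ • ∑ i, v i, h⟫
      ≤ (c + c' / n * ∑ i, x i) / 2 * r := by
  have hn' : (0 : ℝ) < n := Nat.cast_pos.2 hn
  have hsum := sum_le_sum fun i (_ : i ∈ Finset.univ) => hle i
  rw [← sum_mul, ← sum_div, sum_add_distrib, ← mul_sum, sum_const,
    card_univ, Fintype.card_fin, nsmul_eq_mul] at hsum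
  rw [real_inner_smul_left, sum_inner, ← mul_sub, ← mul_sub, ← sum_sub_distrib, ← sum_sub_distrib,
    inv_mul_le_iff₀ hn']
  calc _ ≤ _ := hsum
    _ = _ := by field_simp

variable [CompleteSpace E]

theorem isSymmetric_of_hasFDerivAt_gradient {f : E → ℝ} {g : E → E} {H : E →L[ℝ] E} {x : E}
    (hg : ∀ y, HasGradientAt f (g y) y) (hH : HasFDerivAt g H x) :
    (H : E →ₗ[ℝ] E).IsSymmetric := fun u v => by
  have hdual : HasFDerivAt (fun y => toDual ℝ E (g y))
      ((toDual ℝ E).toContinuousLinearEquiv.toContinuousLinearMap.comp H) x :=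
    (toDual ℝ E).toContinuousLinearEquiv.hasFDerivAt.comp x hH
  have := second_derivative_symmetric (fun y => (hg y).hasFDerivAt) hdual u v
  simp only [ContinuousLinearMap.comp_apply, ContinuousLinearEquiv.coe_coe,
    LinearIsometryEquiv.coe_toContinuousLinearEquiv, toDual_apply_apply] at this
  simp only [ContinuousLinearMap.coe_coe, this, real_inner_comm]

theorem hasGradientAt_comp_sub_smul_gradient {f : E → ℝ} {g : E → E} {H : E → E →L[ℝ] E}
    (α : ℝ) (hg : ∀ y, HasGradientAt f (g y) y) (hH : ∀ y, HasFDerivAt g (H y) y) (x : E) :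
    HasGradientAt (fun u => f (u - α • g u))
      (g (x - α • g x) - α • H x (g (x - α • g x))) x := by
  have hstep : HasFDerivAt (fun u => u - α • g u) (ContinuousLinearMap.id ℝ E - α • H x) x :=
    (hasFDerivAt_id x).sub ((hH x).const_smul α)
  rw [hasGradientAt_iff_hasFDerivAt]
  refine ((hg _).hasFDerivAt.comp x hstep).congr_fderiv (ContinuousLinearMap.ext fun v => ?_)
  have hsymm := isSymmetric_of_hasFDerivAt_gradient hg (hH x)
  simp only [toDual_apply_apply, ContinuousLinearMap.comp_apply, sub_apply,
    ContinuousLinearMap.coe_id', id_eq, smul_apply, inner_sub_left,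
    inner_sub_right, real_inner_smul_left, real_inner_smul_right]
  rw [← ContinuousLinearMap.coe_coe (H x), hsymm]

theorem sub_sub_inner_le_of_hasGradientAt {f : E → ℝ} {G : E → E}
    (hf : ∀ x, HasGradientAt f (G x) x) {C : ℝ} {w w' : E}
    (hG : ∀ u, ‖G u - G w‖ ≤ C * ‖u - w‖) :
    f w' - f w - ⟪G w, w' - w⟫ ≤ C / 2 * ‖w' - w‖ ^ 2 := by
  set h := w' - w
  have hline : ∀ t : ℝ, HasDerivAt (fun t : ℝ => f (w + t • h) - t * ⟪G w, h⟫)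
      (⟪G (w + t • h) - G w, h⟫) t := fun t => by
    have hpath : HasDerivAt (fun t : ℝ => w + t • h) h t := by
      simpa using ((hasDerivAt_id t).smul_const h).const_add w
    have hf_line : HasDerivAt (fun t : ℝ => f (w + t • h)) ⟪G (w + t • h), h⟫ t := by
      simpa [Function.comp_def] using (hf _).hasFDerivAt.comp_hasDerivAt t hpath
    rw [inner_sub_left]
    exact (hf_line.sub ((hasDerivAt_id' t).mul_const ⟪G w, h⟫)).congr_deriv (by ring)
  have := sub_le_of_hasDerivAt_le_mul (c := C * ‖h‖ ^ 2) (fun t _ => hline t) fun t ht =>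
    calc ⟪G (w + t • h) - G w, h⟫ ≤ ‖G (w + t • h) - G w‖ * ‖h‖ := real_inner_le_norm _ _
      _ ≤ C * ‖t • h‖ * ‖h‖ := by gcongr; simpa using hG (w + t • h)
      _ = C * ‖h‖ ^ 2 * t := by rw [norm_smul, Real.norm_of_nonneg ht.1]; ring
  simp only [zero_smul, add_zero, one_smul, zero_mul, one_mul, sub_zero, h,
    add_sub_cancel] at this
  linarith

end InnerProductSpace

theorem maml_pseudo_smoothness_general (n d : ℕ) (hn : 0 < n) (L ρ α : ℝ) (hL : 0 < L)
    (hα0 : 0 ≤ α) (hα : α ≤ 1 / L)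
    (𝓛 : Fin n → EuclideanSpace ℝ (Fin d) → ℝ)
    (grad : Fin n → EuclideanSpace ℝ (Fin d) → EuclideanSpace ℝ (Fin d))
    (hess : Fin n → EuclideanSpace ℝ (Fin d) →
      EuclideanSpace ℝ (Fin d) →L[ℝ] EuclideanSpace ℝ (Fin d))
    (hgrad : ∀ i w, HasGradientAt (𝓛 i) (grad i w) w)
    (hhess : ∀ i w, HasFDerivAt (grad i) (hess i w) w)
    (hLipG : ∀ i w w', ‖grad i w - grad i w'‖ ≤ L * ‖w - w'‖)
    (hLipH : ∀ i w w', ‖hess i w - hess i w'‖ ≤ ρ * ‖w - w'‖)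
    (w w' : EuclideanSpace ℝ (Fin d)) :
    (n : ℝ)⁻¹ * ∑ i, 𝓛 i (w' - α • grad i w')
        - (n : ℝ)⁻¹ * ∑ i, 𝓛 i (w - α • grad i w)
        - (inner ℝ ((n : ℝ)⁻¹ • ∑ i, (grad i (w - α • grad i w)
              - α • hess i w (grad i (w - α • grad i w)))) (w' - w) : ℝ)
      ≤ (4 * L + 2 * ρ * α / n * ∑ i, ‖grad i w‖) / 2 * ‖w' - w‖ ^ 2 := by
  have hαL : α * L ≤ 1 := (le_div_iff₀ hL).1 hα
  have hhess_le : ∀ i u, ‖hess i u‖ ≤ L := fun i u =>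
    (hhess i u).le_of_lip' hL.le (.of_forall fun v => hLipG i v u)
  refine average_sub_sub_inner_le hn fun i => ?_
  exact sub_sub_inner_le_of_hasGradientAt
    (hasGradientAt_comp_sub_smul_gradient α (hgrad i) (hhess i)) fun u =>
      norm_sub_smul_apply_sub_le hα0 hαL (hLipG i) (hhess_le i) (hLipH i) u w

/-- Corollary A.1 of Fallah et al. (pseudo-smoothness of the MAML objective):
if each `𝓛ᵢ` has `L`-Lipschitz gradient and `ρ`-Lipschitz Hessian and `α ∈ [0, 1/L]`, then
`F(w') - F(w) - ⟨∇F(w), w'-w⟩ ≤ (L(w)/2)‖w'-w‖²` with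
`L(w) = 4L + (2ρα/n)∑ᵢ‖∇𝓛ᵢ(w)‖`, where `F(w) = (1/n)∑ᵢ 𝓛ᵢ(w - α∇𝓛ᵢ(w))` and
`∇F(w) = (1/n)∑ᵢ (I - α∇²𝓛ᵢ(w)) ∇𝓛ᵢ(w - α∇𝓛ᵢ(w))`. -/
theorem maml_pseudo_smoothness (n d : ℕ) (hn : 0 < n) (L ρ α : ℝ) (hL : 0 < L) (hρ : 0 ≤ ρ)
    (hα0 : 0 ≤ α) (hα : α ≤ 1 / L)
    (𝓛 : Fin n → EuclideanSpace ℝ (Fin d) → ℝ)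
    (grad : Fin n → EuclideanSpace ℝ (Fin d) → EuclideanSpace ℝ (Fin d))
    (hess : Fin n → EuclideanSpace ℝ (Fin d) →
      EuclideanSpace ℝ (Fin d) →L[ℝ] EuclideanSpace ℝ (Fin d))
    (hgrad : ∀ i w, HasGradientAt (𝓛 i) (grad i w) w)
    (hhess : ∀ i w, HasFDerivAt (grad i) (hess i w) w)
    (hLipG : ∀ i w w', ‖grad i w - grad i w'‖ ≤ L * ‖w - w'‖)
    (hLipH : ∀ i w w', ‖hess i w - hess i w'‖ ≤ ρ * ‖w - w'‖)
    (w w' : EuclideanSpace ℝ (Fin d)) :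
    (n : ℝ)⁻¹ * ∑ i, 𝓛 i (w' - α • grad i w')
        - (n : ℝ)⁻¹ * ∑ i, 𝓛 i (w - α • grad i w)
        - (inner ℝ ((n : ℝ)⁻¹ • ∑ i, (grad i (w - α • grad i w)
              - α • hess i w (grad i (w - α • grad i w)))) (w' - w) : ℝ)
      ≤ (4 * L + 2 * ρ * α / n * ∑ i, ‖grad i w‖) / 2 * ‖w' - w‖ ^ 2 :=
  maml_pseudo_smoothness_general n d hn L ρ α hL hα0 hα 𝓛 grad hess hgrad hhess hLipG hLipH w w'
end

section
/- Let each $\mathcal{L}_i:\mathbb{R}^d\to\mathbb{R}$ have $L$-Lipschitz gradient and $\rho$-Lipschitz Hessian, and additionally suppose $\|\nabla\mathcal{L}_i(w)\|\le G$ for all $w$ and $i$. If $\alpha\in[0,1/L]$, then $F(w) = \frac{1}{n}\sum_{i=1}^n \mathcal{L}_i(w-\alpha\nabla\mathcal{L}_i(w))$ has $L_F$-Lipschitz gradient with $L_F = 4L + 2\rho\alpha G$. -/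
open Finset

/-!
Each summand of `∇F` is `(I - α∇²𝓛ᵢ(w)) ∇𝓛ᵢ(u)` with `u = w - α∇𝓛ᵢ(w)`. The gradient step
`w ↦ u` is `(1 + αL)`-Lipschitz, so `∇𝓛ᵢ(u)` is `L(1 + αL)`-Lipschitz in `w`. The product
`∇²𝓛ᵢ(w) ∇𝓛ᵢ(u)` is Lipschitz with constant `ρG + L · L(1 + αL)`, because the Hessian has
operator norm at most `L` and the gradient is bounded by `G`. Altogether the summand is
`(L(1 + αL)² + αρG)`-Lipschitz, which is at most `4L + αρG` when `αL ≤ 1`, and averaging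
preserves the constant.
-/

section TaskGradient

variable {E : Type*} [NormedAddCommGroup E] [NormedSpace ℝ E]

/-- The gradient of `w ↦ 𝓛(w - α∇𝓛(w))`, written with `g = ∇𝓛` and `H = ∇²𝓛`. -/
def mamlTaskGrad (g : E → E) (H : E → E →L[ℝ] E) (α : ℝ) (w : E) : E :=
  g (w - α • g w) - α • H w (g (w - α • g w))

theorem norm_gradStep_sub_le {g : E → E} {L α : ℝ} (hα : 0 ≤ α)
    (hLip : ∀ w w', ‖g w - g w'‖ ≤ L * ‖w - w'‖) (w w' : E) :
    ‖(w - α • g w) - (w' - α • g w')‖ ≤ (1 + α * L) * ‖w - w'‖ :=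
  calc ‖(w - α • g w) - (w' - α • g w')‖ = ‖(w - w') - α • (g w - g w')‖ := by
        rw [smul_sub]; abel_nf
    _ ≤ ‖w - w'‖ + α * ‖g w - g w'‖ := by
        grw [norm_sub_le, norm_smul, Real.norm_of_nonneg hα]
    _ ≤ ‖w - w'‖ + α * (L * ‖w - w'‖) := by gcongr; exact hLip w w'
    _ = (1 + α * L) * ‖w - w'‖ := by ring

theorem ContinuousLinearMap.norm_apply_sub_apply_le {F : Type*} [NormedAddCommGroup F]
    [NormedSpace ℝ F] (A B : E →L[ℝ] F) (x y : E) :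
    ‖A x - B y‖ ≤ ‖A - B‖ * ‖x‖ + ‖B‖ * ‖x - y‖ :=
  calc ‖A x - B y‖ = ‖(A - B) x + B (x - y)‖ := by
        rw [map_sub, sub_apply]; abel_nf
    _ ≤ ‖A - B‖ * ‖x‖ + ‖B‖ * ‖x - y‖ :=
        (norm_add_le _ _).trans (add_le_add ((A - B).le_opNorm x) (B.le_opNorm _))

theorem norm_mamlTaskGrad_sub_le {g : E → E} {H : E → E →L[ℝ] E} {L ρ α G : ℝ}
    (hα : 0 ≤ α) (hLipG : ∀ w w', ‖g w - g w'‖ ≤ L * ‖w - w'‖)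
    (hLipH : ∀ w w', ‖H w - H w'‖ ≤ ρ * ‖w - w'‖) (hbddG : ∀ w, ‖g w‖ ≤ G)
    (hbddH : ∀ w, ‖H w‖ ≤ L) (w w' : E) :
    ‖mamlTaskGrad g H α w - mamlTaskGrad g H α w'‖
      ≤ (L * (1 + α * L) ^ 2 + α * ρ * G) * ‖w - w'‖ := by
  set u := w - α • g w
  set u' := w' - α • g w'
  have hL : 0 ≤ L := (norm_nonneg _).trans (hbddH w)
  have hgu : ‖g u - g u'‖ ≤ L * (1 + α * L) * ‖w - w'‖ := by
    rw [mul_assoc]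
    exact (hLipG u u').trans (by gcongr; exact norm_gradStep_sub_le hα hLipG w w')
  have hHgu : ‖H w (g u) - H w' (g u')‖ ≤ (ρ * G + L * (L * (1 + α * L))) * ‖w - w'‖ := by
    have hρΔ : 0 ≤ ρ * ‖w - w'‖ := (norm_nonneg _).trans (hLipH w w')
    calc ‖H w (g u) - H w' (g u')‖ ≤ ‖H w - H w'‖ * ‖g u‖ + ‖H w'‖ * ‖g u - g u'‖ :=
          (H w).norm_apply_sub_apply_le (H w') _ _
      _ ≤ ρ * ‖w - w'‖ * G + L * (L * (1 + α * L) * ‖w - w'‖) := by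
          gcongr
          · exact hLipH w w'
          · exact hbddG u
          · exact hbddH w'
      _ = (ρ * G + L * (L * (1 + α * L))) * ‖w - w'‖ := by ring
  calc ‖mamlTaskGrad g H α w - mamlTaskGrad g H α w'‖
      = ‖(g u - g u') - α • (H w (g u) - H w' (g u'))‖ := by
        simp only [mamlTaskGrad, smul_sub, u, u']; abel_nf
    _ ≤ ‖g u - g u'‖ + α * ‖H w (g u) - H w' (g u')‖ := by
        grw [norm_sub_le, norm_smul, Real.norm_of_nonneg hα]
    _ ≤ L * (1 + α * L) * ‖w - w'‖ + α * ((ρ * G + L * (L * (1 + α * L))) * ‖w - w'‖) := by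
        gcongr
    _ = (L * (1 + α * L) ^ 2 + α * ρ * G) * ‖w - w'‖ := by ring

end TaskGradient

theorem norm_inv_card_smul_sum_le {ι E : Type*} [SeminormedAddCommGroup E] [NormedSpace ℝ E]
    (s : Finset ι) (f : ι → E) {C : ℝ} (hC : 0 ≤ C) (hf : ∀ i ∈ s, ‖f i‖ ≤ C) :
    ‖(#s : ℝ)⁻¹ • ∑ i ∈ s, f i‖ ≤ C := by
  rcases s.eq_empty_or_nonempty with rfl | hs
  · simpa using hC
  calc ‖(#s : ℝ)⁻¹ • ∑ i ∈ s, f i‖ ≤ (#s : ℝ)⁻¹ * (#s * C) := by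
        rw [norm_smul, Real.norm_of_nonneg (by positivity)]
        gcongr
        exact norm_sum_le_of_le s hf |>.trans_eq (by rw [sum_const, nsmul_eq_mul])
    _ = C := by field_simp

theorem maml_smoothness_general (n d : ℕ) (L ρ α G : ℝ) (hL : 0 < L) (hρ : 0 ≤ ρ)
    (hG : 0 ≤ G) (hα0 : 0 ≤ α) (hα : α ≤ 1 / L)
    (grad : Fin n → EuclideanSpace ℝ (Fin d) → EuclideanSpace ℝ (Fin d))
    (hess : Fin n → EuclideanSpace ℝ (Fin d) →
      EuclideanSpace ℝ (Fin d) →L[ℝ] EuclideanSpace ℝ (Fin d))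
    (hhess : ∀ i w, HasFDerivAt (grad i) (hess i w) w)
    (hLipG : ∀ i w w', ‖grad i w - grad i w'‖ ≤ L * ‖w - w'‖)
    (hLipH : ∀ i w w', ‖hess i w - hess i w'‖ ≤ ρ * ‖w - w'‖)
    (hbddG : ∀ i w, ‖grad i w‖ ≤ G) :
    ∀ w w' : EuclideanSpace ℝ (Fin d),
      ‖(n : ℝ)⁻¹ • ∑ i, (grad i (w - α • grad i w)
            - α • hess i w (grad i (w - α • grad i w)))
          - (n : ℝ)⁻¹ • ∑ i, (grad i (w' - α • grad i w')
            - α • hess i w' (grad i (w' - α • grad i w')))‖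
        ≤ (4 * L + 2 * ρ * α * G) * ‖w - w'‖ := by
  intro w w'
  have hαL : α * L ≤ 1 := by rwa [le_div_iff₀ hL] at hα
  have hconst : L * (1 + α * L) ^ 2 + α * ρ * G ≤ 4 * L + 2 * ρ * α * G := by
    have hsq : (1 + α * L) ^ 2 ≤ 2 ^ 2 :=
      pow_le_pow_left₀ (by positivity) (by linarith) 2
    nlinarith [mul_le_mul_of_nonneg_left hsq hL.le, mul_nonneg (mul_nonneg hρ hα0) hG]
  have htask : ∀ i, ‖mamlTaskGrad (grad i) (hess i) α w - mamlTaskGrad (grad i) (hess i) α w'‖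
      ≤ (4 * L + 2 * ρ * α * G) * ‖w - w'‖ := fun i =>
    (norm_mamlTaskGrad_sub_le hα0 (hLipG i) (hLipH i) (hbddG i)
      (fun x => (hhess i x).le_of_lip' hL.le (.of_forall fun v => hLipG i v x)) w w').trans
      (by gcongr)
  rw [← smul_sub, ← sum_sub_distrib]
  have havg := norm_inv_card_smul_sum_le univ _ (by positivity) fun i _ => htask i
  rwa [card_univ, Fintype.card_fin] at havg

/-- Smoothness of the MAML objective under bounded gradients: if each `𝓛ᵢ` has
`L`-Lipschitz gradient, `ρ`-Lipschitz Hessian, `‖∇𝓛ᵢ(w)‖ ≤ G`, and `α ∈ [0, 1/L]`,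
then `∇F` is `L_F`-Lipschitz with `L_F = 4L + 2ραG`, where
`∇F(w) = (1/n)∑ᵢ (I - α∇²𝓛ᵢ(w)) ∇𝓛ᵢ(w - α∇𝓛ᵢ(w))`. -/
theorem maml_smoothness (n d : ℕ) (hn : 0 < n) (L ρ α G : ℝ) (hL : 0 < L) (hρ : 0 ≤ ρ)
    (hG : 0 ≤ G) (hα0 : 0 ≤ α) (hα : α ≤ 1 / L)
    (𝓛 : Fin n → EuclideanSpace ℝ (Fin d) → ℝ)
    (grad : Fin n → EuclideanSpace ℝ (Fin d) → EuclideanSpace ℝ (Fin d))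
    (hess : Fin n → EuclideanSpace ℝ (Fin d) →
      EuclideanSpace ℝ (Fin d) →L[ℝ] EuclideanSpace ℝ (Fin d))
    (hgrad : ∀ i w, HasGradientAt (𝓛 i) (grad i w) w)
    (hhess : ∀ i w, HasFDerivAt (grad i) (hess i w) w)
    (hLipG : ∀ i w w', ‖grad i w - grad i w'‖ ≤ L * ‖w - w'‖)
    (hLipH : ∀ i w w', ‖hess i w - hess i w'‖ ≤ ρ * ‖w - w'‖)
    (hbddG : ∀ i w, ‖grad i w‖ ≤ G) :
    ∀ w w' : EuclideanSpace ℝ (Fin d),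
      ‖(n : ℝ)⁻¹ • ∑ i, (grad i (w - α • grad i w)
            - α • hess i w (grad i (w - α • grad i w)))
          - (n : ℝ)⁻¹ • ∑ i, (grad i (w' - α • grad i w')
            - α • hess i w' (grad i (w' - α • grad i w')))‖
        ≤ (4 * L + 2 * ρ * α * G) * ‖w - w'‖ :=
  maml_smoothness_general n d L ρ α G hL hρ hG hα0 hα grad hess hhess hLipG hLipH hbddG
end

section
/- Suppose each $\mathcal{L}_i$ has $L$-Lipschitz gradient, $\|\nabla\mathcal{L}_i(w)\|\le G$ for all $w$, gradient dissimilarity $\frac{1}{n}\sum_i\|\nabla\mathcal{L}_i(w)-\nabla\mathcal{L}(w)\|^2\le\gamma_G^2$, Hessian dissimilarity $\frac{1}{n}\sum_i\|\nabla^2\mathcal{L}_i(w)-\frac{1}{n}\sum_j\nabla^2\mathcal{L}_j(w)\|^2\le\gamma_H^2$, and $\alpha\in(0,1/L]$. Then $\frac{1}{n}\sum_{i=1}^n\|\nabla F_i(w)-\nabla F(w)\|^2 \le 3G^2\alpha^2\gamma_H^2 + 192\gamma_G^2$ for all $w$, where $F_i(w)=\mathcal{L}_i(w-\alpha\nabla\mathcal{L}_i(w))$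 and $F=\frac{1}{n}\sum_i F_i$. -/
/-! Compare every meta-gradient `∇Fᵢ(w)` with the single vector `(I - αH̄) b̄`, where `H̄` is the
mean Hessian at `w` and `b̄` the mean of the gradients `∇𝓛ⱼ(w - αā)` at the step along the mean
gradient `ā`. The mean minimises the sum of squared distances, so it suffices to bound each
`‖∇Fᵢ(w) - (I - αH̄) b̄‖`. As `αL ≤ 1`, the operator `I - αH̄` has norm at most `2` and
`v ↦ ∇𝓛ᵢ(w - αv)` is `1`-Lipschitz, which bounds that distance by
`2‖∇𝓛ᵢ(w) - ā‖ + 2‖∇𝓛ᵢ(w - αā) - b̄‖ + αG‖∇²𝓛ᵢ(w) - H̄‖`. Squaring, averaging and applying the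
gradient dissimilarity at `w` and at `w - αā` gives `24γ_G² + 3α²G²γ_H²`. -/

open Finset

section Mean

variable {ι E : Type*} [Fintype ι]

lemma sum_norm_sub_mean_sq_le [NormedAddCommGroup E] [InnerProductSpace ℝ E]
    (x : ι → E) (c : E) :
    ∑ i, ‖x i - (Fintype.card ι : ℝ)⁻¹ • ∑ j, x j‖ ^ 2 ≤ ∑ i, ‖x i - c‖ ^ 2 := by
  rcases isEmpty_or_nonempty ι with hι | hι
  · simp
  set m := (Fintype.card ι : ℝ)⁻¹ • ∑ j, x j
  have hsum : ∑ i, (x i - m) = 0 := by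
    rw [sum_sub_distrib, sum_const, card_univ, ← Nat.cast_smul_eq_nsmul ℝ, smul_smul,
      mul_inv_cancel₀ (by positivity), one_smul, sub_self]
  have hexpand : ∀ i, ‖x i - c‖ ^ 2
      = ‖x i - m‖ ^ 2 + 2 * inner ℝ (x i - m) (m - c) + ‖m - c‖ ^ 2 := fun i => by
    rw [← norm_add_sq_real, sub_add_sub_cancel]
  calc ∑ i, ‖x i - m‖ ^ 2
      ≤ ∑ i, ‖x i - m‖ ^ 2 + 2 * inner ℝ (∑ i, (x i - m)) (m - c)
        + ∑ _i : ι, ‖m - c‖ ^ 2 := by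
        rw [hsum, inner_zero_left, mul_zero, add_zero]
        exact le_add_of_nonneg_right (by positivity)
    _ = ∑ i, ‖x i - c‖ ^ 2 := by
        simp only [hexpand, sum_add_distrib, sum_inner, mul_sum]

lemma norm_mean_le [SeminormedAddCommGroup E] [NormedSpace ℝ E] {x : ι → E} {C : ℝ}
    (hC : 0 ≤ C) (hx : ∀ i, ‖x i‖ ≤ C) :
    ‖(Fintype.card ι : ℝ)⁻¹ • ∑ i, x i‖ ≤ C := by
  calc ‖(Fintype.card ι : ℝ)⁻¹ • ∑ i, x i‖
      ≤ (Fintype.card ι : ℝ)⁻¹ * ∑ i, ‖x i‖ := by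
        rw [norm_smul, norm_inv, RCLike.norm_natCast]
        gcongr
        exact norm_sum_le _ _
    _ ≤ (Fintype.card ι : ℝ)⁻¹ * (Fintype.card ι * C) := by
        gcongr
        simpa using sum_le_sum fun i (_ : i ∈ univ) => hx i
    _ ≤ C := by
        rw [← mul_assoc]
        exact mul_le_of_le_one_left hC (inv_mul_le_one_of_le₀ le_rfl (by positivity))

end Mean

section Steps

variable {E F : Type*} [SeminormedAddCommGroup E] [NormedSpace ℝ E]

lemma norm_sub_smul_apply_sub_le_s6 {α : ℝ} (hα : 0 ≤ α) {A B : E →L[ℝ] E} (hB : α * ‖B‖ ≤ 1)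
    (u v : E) :
    ‖(u - α • A u) - (v - α • B v)‖ ≤ 2 * ‖u - v‖ + α * ‖A - B‖ * ‖u‖ := by
  have hid : (u - α • A u) - (v - α • B v) = (u - v) - α • B (u - v) - α • (A - B) u := by
    simp only [map_sub, sub_apply, smul_sub]
    abel
  have hBuv : ‖α • B (u - v)‖ ≤ α * ‖B‖ * ‖u - v‖ := by
    rw [norm_smul, Real.norm_of_nonneg hα, mul_assoc]
    gcongr
    exact B.le_opNorm _
  have hABu : ‖α • (A - B) u‖ ≤ α * ‖A - B‖ * ‖u‖ := by
    rw [norm_smul, Real.norm_of_nonneg hα, mul_assoc]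
    gcongr
    exact (A - B).le_opNorm _
  calc ‖(u - α • A u) - (v - α • B v)‖
      ≤ ‖u - v‖ + α * ‖B‖ * ‖u - v‖ + α * ‖A - B‖ * ‖u‖ := by
        rw [hid]
        exact (norm_sub_le _ _).trans (add_le_add ((norm_sub_le _ _).trans
          (add_le_add le_rfl hBuv)) hABu)
    _ ≤ 2 * ‖u - v‖ + α * ‖A - B‖ * ‖u‖ := by
        nlinarith [mul_le_mul_of_nonneg_right hB (norm_nonneg (u - v))]

lemma norm_sub_step_sub_le [SeminormedAddCommGroup F] {f : E → F} {L α : ℝ} (hα : 0 ≤ α)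
    (hαL : α * L ≤ 1) (hf : ∀ x y, ‖f x - f y‖ ≤ L * ‖x - y‖) (w a b : E) :
    ‖f (w - α • a) - f (w - α • b)‖ ≤ ‖a - b‖ := by
  calc ‖f (w - α • a) - f (w - α • b)‖
      ≤ L * ‖(w - α • a) - (w - α • b)‖ := hf _ _
    _ = α * L * ‖a - b‖ := by
        rw [sub_sub_sub_cancel_left, ← smul_sub, norm_smul, Real.norm_of_nonneg hα,
          norm_sub_rev]
        ring
    _ ≤ ‖a - b‖ := mul_le_of_le_one_left (norm_nonneg _) hαL

end Steps

theorem meta_grad_dissimilarity_of_norm_hess_le {E : Type*} [NormedAddCommGroup E]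
    [InnerProductSpace ℝ E] {n : ℕ} {L α G γG γH : ℝ} (hL : 0 ≤ L) (hα0 : 0 ≤ α)
    (hαL : α * L ≤ 1) (grad : Fin n → E → E) (hess : Fin n → E → E →L[ℝ] E)
    (hLipG : ∀ i w w', ‖grad i w - grad i w'‖ ≤ L * ‖w - w'‖)
    (hHess : ∀ i w, ‖hess i w‖ ≤ L)
    (hbddG : ∀ i w, ‖grad i w‖ ≤ G)
    (hdisG : ∀ w : E,
      (n : ℝ)⁻¹ * ∑ i, ‖grad i w - (n : ℝ)⁻¹ • ∑ j, grad j w‖ ^ 2 ≤ γG ^ 2)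
    (hdisH : ∀ w : E,
      (n : ℝ)⁻¹ * ∑ i, ‖hess i w - (n : ℝ)⁻¹ • ∑ j, hess j w‖ ^ 2 ≤ γH ^ 2)
    (w : E) :
    (n : ℝ)⁻¹ * ∑ i, ‖(grad i (w - α • grad i w)
          - α • hess i w (grad i (w - α • grad i w)))
        - (n : ℝ)⁻¹ • ∑ j, (grad j (w - α • grad j w)
          - α • hess j w (grad j (w - α • grad j w)))‖ ^ 2
      ≤ 3 * G ^ 2 * α ^ 2 * γH ^ 2 + 192 * γG ^ 2 := by
  set abar := (n : ℝ)⁻¹ • ∑ j, grad j w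
  set b := fun i => grad i (w - α • abar)
  set bbar := (n : ℝ)⁻¹ • ∑ j, b j
  set Hbar := (n : ℝ)⁻¹ • ∑ j, hess j w
  set x := fun i => grad i (w - α • grad i w) - α • hess i w (grad i (w - α • grad i w))
  have hHbar : α * ‖Hbar‖ ≤ 1 := by
    have := norm_mean_le hL fun i => hHess i w
    rw [Fintype.card_fin] at this
    nlinarith
  have hpt : ∀ i, ‖x i - (bbar - α • Hbar bbar)‖ ^ 2 ≤ 12 * ‖grad i w - abar‖ ^ 2
      + 12 * ‖b i - bbar‖ ^ 2 + 3 * α ^ 2 * G ^ 2 * ‖hess i w - Hbar‖ ^ 2 := by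
    intro i
    have h1 := norm_sub_smul_apply_sub_le_s6 hα0 hHbar (A := hess i w)
      (grad i (w - α • grad i w)) bbar
    have h2 := norm_sub_step_sub_le hα0 hαL (hLipG i) w (grad i w) abar
    have h3 := norm_sub_le_norm_sub_add_norm_sub (grad i (w - α • grad i w)) (b i) bbar
    have h4 := mul_le_mul_of_nonneg_left (hbddG i (w - α • grad i w))
      (mul_nonneg hα0 (norm_nonneg (hess i w - Hbar)))
    have hle : ‖x i - (bbar - α • Hbar bbar)‖
        ≤ 2 * ‖grad i w - abar‖ + 2 * ‖b i - bbar‖ + α * G * ‖hess i w - Hbar‖ := by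
      linarith
    nlinarith [pow_le_pow_left₀ (norm_nonneg _) hle 2,
      sq_nonneg (‖grad i w - abar‖ - ‖b i - bbar‖),
      sq_nonneg (2 * ‖grad i w - abar‖ - α * G * ‖hess i w - Hbar‖),
      sq_nonneg (2 * ‖b i - bbar‖ - α * G * ‖hess i w - Hbar‖)]
  have hmean := sum_norm_sub_mean_sq_le x (bbar - α • Hbar bbar)
  rw [Fintype.card_fin] at hmean
  calc (n : ℝ)⁻¹ * ∑ i, ‖x i - (n : ℝ)⁻¹ • ∑ j, x j‖ ^ 2
      ≤ (n : ℝ)⁻¹ * ∑ i, (12 * ‖grad i w - abar‖ ^ 2 + 12 * ‖b i - bbar‖ ^ 2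
        + 3 * α ^ 2 * G ^ 2 * ‖hess i w - Hbar‖ ^ 2) :=
        mul_le_mul_of_nonneg_left (hmean.trans (sum_le_sum fun i _ => hpt i)) (by positivity)
    _ = 12 * ((n : ℝ)⁻¹ * ∑ i, ‖grad i w - abar‖ ^ 2)
        + 12 * ((n : ℝ)⁻¹ * ∑ i, ‖b i - bbar‖ ^ 2)
        + 3 * α ^ 2 * G ^ 2 * ((n : ℝ)⁻¹ * ∑ i, ‖hess i w - Hbar‖ ^ 2) := by
        simp only [sum_add_distrib, ← mul_sum]
        ring
    _ ≤ 12 * γG ^ 2 + 12 * γG ^ 2 + 3 * α ^ 2 * G ^ 2 * γH ^ 2 := by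
        gcongr
        exacts [hdisG w, hdisG (w - α • abar), hdisH w]
    _ ≤ 3 * G ^ 2 * α ^ 2 * γH ^ 2 + 192 * γG ^ 2 := by nlinarith [sq_nonneg γG]

theorem meta_grad_dissimilarity_general (n d : ℕ) (L α G γG γH : ℝ)
    (hα0 : 0 < α) (hα : α ≤ 1 / L)
    (grad : Fin n → EuclideanSpace ℝ (Fin d) → EuclideanSpace ℝ (Fin d))
    (hess : Fin n → EuclideanSpace ℝ (Fin d) →
      EuclideanSpace ℝ (Fin d) →L[ℝ] EuclideanSpace ℝ (Fin d))
    (hhess : ∀ i w, HasFDerivAt (grad i) (hess i w) w)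
    (hLipG : ∀ i w w', ‖grad i w - grad i w'‖ ≤ L * ‖w - w'‖)
    (hbddG : ∀ i w, ‖grad i w‖ ≤ G)
    (hdisG : ∀ w : EuclideanSpace ℝ (Fin d),
      (n : ℝ)⁻¹ * ∑ i, ‖grad i w - (n : ℝ)⁻¹ • ∑ j, grad j w‖ ^ 2 ≤ γG ^ 2)
    (hdisH : ∀ w : EuclideanSpace ℝ (Fin d),
      (n : ℝ)⁻¹ * ∑ i, ‖hess i w - (n : ℝ)⁻¹ • ∑ j, hess j w‖ ^ 2 ≤ γH ^ 2)
    (w : EuclideanSpace ℝ (Fin d)) :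
    (n : ℝ)⁻¹ * ∑ i, ‖(grad i (w - α • grad i w)
          - α • hess i w (grad i (w - α • grad i w)))
        - (n : ℝ)⁻¹ • ∑ j, (grad j (w - α • grad j w)
          - α • hess j w (grad j (w - α • grad j w)))‖ ^ 2
      ≤ 3 * G ^ 2 * α ^ 2 * γH ^ 2 + 192 * γG ^ 2 := by
  have hL : 0 < L := one_div_pos.mp (hα0.trans_le hα)
  have hαL : α * L ≤ 1 := by rwa [le_div_iff₀ hL] at hα
  have hHess : ∀ i w, ‖hess i w‖ ≤ L := fun i w =>
    (hhess i w).le_of_lip' hL.le (Filter.Eventually.of_forall fun w' => hLipG i w' w)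
  exact meta_grad_dissimilarity_of_norm_hess_le hL.le hα0.le hαL grad hess hLipG hHess hbddG
    hdisG hdisH w

/-- Lemma 4.4 of Fallah et al. (meta-gradient dissimilarity): under `L`-Lipschitz gradients,
bounded gradients, gradient dissimilarity `γG²`, Hessian dissimilarity `γH²`, and
`α ∈ (0, 1/L]`, one has
`(1/n)∑ᵢ‖∇Fᵢ(w) - ∇F(w)‖² ≤ 3G²α²γH² + 192γG²`, where
`∇Fᵢ(w) = (I - α∇²𝓛ᵢ(w)) ∇𝓛ᵢ(w - α∇𝓛ᵢ(w))` and `∇F` is their average. -/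
theorem meta_grad_dissimilarity (n d : ℕ) (hn : 0 < n) (L α G γG γH : ℝ) (hL : 0 < L)
    (hG : 0 ≤ G) (hγG : 0 ≤ γG) (hγH : 0 ≤ γH) (hα0 : 0 < α) (hα : α ≤ 1 / L)
    (𝓛 : Fin n → EuclideanSpace ℝ (Fin d) → ℝ)
    (grad : Fin n → EuclideanSpace ℝ (Fin d) → EuclideanSpace ℝ (Fin d))
    (hess : Fin n → EuclideanSpace ℝ (Fin d) →
      EuclideanSpace ℝ (Fin d) →L[ℝ] EuclideanSpace ℝ (Fin d))
    (hgrad : ∀ i w, HasGradientAt (𝓛 i) (grad i w) w)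
    (hhess : ∀ i w, HasFDerivAt (grad i) (hess i w) w)
    (hLipG : ∀ i w w', ‖grad i w - grad i w'‖ ≤ L * ‖w - w'‖)
    (hbddG : ∀ i w, ‖grad i w‖ ≤ G)
    (hdisG : ∀ w : EuclideanSpace ℝ (Fin d),
      (n : ℝ)⁻¹ * ∑ i, ‖grad i w - (n : ℝ)⁻¹ • ∑ j, grad j w‖ ^ 2 ≤ γG ^ 2)
    (hdisH : ∀ w : EuclideanSpace ℝ (Fin d),
      (n : ℝ)⁻¹ * ∑ i, ‖hess i w - (n : ℝ)⁻¹ • ∑ j, hess j w‖ ^ 2 ≤ γH ^ 2)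
    (w : EuclideanSpace ℝ (Fin d)) :
    (n : ℝ)⁻¹ * ∑ i, ‖(grad i (w - α • grad i w)
          - α • hess i w (grad i (w - α • grad i w)))
        - (n : ℝ)⁻¹ • ∑ j, (grad j (w - α • grad j w)
          - α • hess j w (grad j (w - α • grad j w)))‖ ^ 2
      ≤ 3 * G ^ 2 * α ^ 2 * γH ^ 2 + 192 * γG ^ 2 :=
  meta_grad_dissimilarity_general n d L α G γG γH hα0 hα grad hess hhess hLipG hbddG hdisG hdisH w
end

section
/- Let $u, v, \hat{v}, w \in \mathbb{R}^d$ (a Hilbert space), $\beta\in(0,1)$, and let $\hat{v}$ be a random vector with $\mathbb{E}[\hat{v}] = v'$ for some fixed $v'$ and $\mathbb{E}[\|\hat{v}-v'\|^2]\le\sigma^2$. Define $u^+ = (1-\beta)u + \beta\hat{v}$. Then $\mathbb{E}[\|v' - u^+\|^2] \le (1-\beta)\|v-u\|^2 + (1-\beta)(1+1/\beta)\|v'-v\|^2 + \beta^2\sigma^2$. -/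
open MeasureTheory

/-! The error `v' - u⁺` splits as the deterministic part `(1-β)(v' - u)` plus the centred noise
`-β (v̂ - v')`. Since the noise has mean zero the cross term integrates away, leaving
`(1-β)²‖v' - u‖² + β² 𝔼‖v̂ - v'‖²`; Young's inequality with weight `β` on
`v' - u = (v - u) + (v' - v)` together with `(1-β)²(1+β) ≤ 1-β` bounds the first term. -/

section Young

lemma add_sq_le_of_pos {β : ℝ} (hβ : 0 < β) (a b : ℝ) :
    (a + b) ^ 2 ≤ (1 + β) * a ^ 2 + (1 + 1 / β) * b ^ 2 := by
  have cross : 2 * a * b ≤ β * a ^ 2 + b ^ 2 / β := by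
    rw [← sub_nonneg]
    have key : β * a ^ 2 + b ^ 2 / β - 2 * a * b = (β * a - b) ^ 2 / β := by
      field_simp
      ring
    rw [key]
    positivity
  have expand : (1 + β) * a ^ 2 + (1 + 1 / β) * b ^ 2
      = a ^ 2 + b ^ 2 + (β * a ^ 2 + b ^ 2 / β) := by ring
  nlinarith

variable {E : Type*} [SeminormedAddCommGroup E]

lemma norm_add_sq_le_of_pos {β : ℝ} (hβ : 0 < β) (x y : E) :
    ‖x + y‖ ^ 2 ≤ (1 + β) * ‖x‖ ^ 2 + (1 + 1 / β) * ‖y‖ ^ 2 := by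
  calc ‖x + y‖ ^ 2 ≤ (‖x‖ + ‖y‖) ^ 2 := by gcongr; exact norm_add_le x y
    _ ≤ _ := add_sq_le_of_pos hβ _ _

lemma one_sub_sq_mul_norm_add_sq_le {β : ℝ} (hβ : β ∈ Set.Ioo (0 : ℝ) 1) (x y : E) :
    (1 - β) ^ 2 * ‖x + y‖ ^ 2 ≤ (1 - β) * ‖x‖ ^ 2 + (1 - β) * (1 + 1 / β) * ‖y‖ ^ 2 := by
  obtain ⟨hβ0, hβ1⟩ := hβ
  have hshrink : (1 - β) ^ 2 * (1 + β) ≤ 1 - β := by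
    nlinarith [mul_nonneg (sub_nonneg.2 hβ1.le) (sq_nonneg β)]
  have hone_sub_sq : (1 - β) ^ 2 ≤ 1 - β := by nlinarith
  calc (1 - β) ^ 2 * ‖x + y‖ ^ 2
      ≤ (1 - β) ^ 2 * ((1 + β) * ‖x‖ ^ 2 + (1 + 1 / β) * ‖y‖ ^ 2) := by
        gcongr; exact norm_add_sq_le_of_pos hβ0 x y
    _ = (1 - β) ^ 2 * (1 + β) * ‖x‖ ^ 2 + (1 - β) ^ 2 * ((1 + 1 / β) * ‖y‖ ^ 2) := by ring
    _ ≤ (1 - β) * ‖x‖ ^ 2 + (1 - β) * ((1 + 1 / β) * ‖y‖ ^ 2) := by gcongr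
    _ = _ := by ring

end Young

section BiasVariance

variable {Ω E : Type*} [MeasurableSpace Ω] {μ : Measure Ω} [IsProbabilityMeasure μ]
  [NormedAddCommGroup E] [InnerProductSpace ℝ E] [CompleteSpace E]

lemma integral_norm_add_smul_sq_of_integral_eq_zero {X : Ω → E} (hX : Integrable X μ)
    (hX_sq : Integrable (fun ω => ‖X ω‖ ^ 2) μ) (hX_mean : ∫ ω, X ω ∂μ = 0) (a : E) (c : ℝ) :
    ∫ ω, ‖a + c • X ω‖ ^ 2 ∂μ = ‖a‖ ^ 2 + c ^ 2 * ∫ ω, ‖X ω‖ ^ 2 ∂μ := by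
  have hexpand : ∀ ω, ‖a + c • X ω‖ ^ 2
      = ‖a‖ ^ 2 + 2 * c * inner ℝ a (X ω) + c ^ 2 * ‖X ω‖ ^ 2 := by
    intro ω
    rw [norm_add_sq_real, real_inner_smul_right, norm_smul, mul_pow, Real.norm_eq_abs, sq_abs]
    ring
  have hcross_int : Integrable (fun ω => 2 * c * inner ℝ a (X ω)) μ :=
    (hX.const_inner a).const_mul _
  have hcross : ∫ ω, 2 * c * inner ℝ a (X ω) ∂μ = 0 := by
    rw [integral_const_mul, integral_inner hX, hX_mean, inner_zero_right, mul_zero]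
  simp_rw [hexpand]
  rw [integral_add (f := fun ω => ‖a‖ ^ 2 + 2 * c * inner ℝ a (X ω))
      ((integrable_const _).add hcross_int) (hX_sq.const_mul _),
    integral_add (integrable_const _) hcross_int, hcross, integral_const_mul]
  simp

end BiasVariance

theorem moving_average_one_step_general {Ω : Type*} [MeasurableSpace Ω] (μ : Measure Ω)
    [IsProbabilityMeasure μ] (d : ℕ) (β σ : ℝ) (hβ : β ∈ Set.Ioo (0 : ℝ) 1)
    (u v v' : EuclideanSpace ℝ (Fin d)) (vh : Ω → EuclideanSpace ℝ (Fin d))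
    (hint : Integrable vh μ) (hmean : ∫ ω, vh ω ∂μ = v')
    (hvarint : Integrable (fun ω => ‖vh ω - v'‖ ^ 2) μ)
    (hvar : ∫ ω, ‖vh ω - v'‖ ^ 2 ∂μ ≤ σ ^ 2) :
    ∫ ω, ‖v' - ((1 - β) • u + β • vh ω)‖ ^ 2 ∂μ
      ≤ (1 - β) * ‖v - u‖ ^ 2 + (1 - β) * (1 + 1 / β) * ‖v' - v‖ ^ 2 + β ^ 2 * σ ^ 2 := by
  have hsplit : ∀ ω, v' - ((1 - β) • u + β • vh ω)
      = (1 - β) • ((v - u) + (v' - v)) + (-β) • (vh ω - v') := fun ω => by module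
  have hnoise_mean : ∫ ω, (vh ω - v') ∂μ = 0 := by
    rw [integral_sub hint (integrable_const _), hmean, integral_const]
    simp
  have hbias : ‖(1 - β) • ((v - u) + (v' - v))‖ ^ 2 = (1 - β) ^ 2 * ‖(v - u) + (v' - v)‖ ^ 2 := by
    rw [norm_smul, mul_pow, Real.norm_eq_abs, sq_abs]
  simp_rw [hsplit]
  rw [integral_norm_add_smul_sq_of_integral_eq_zero (X := fun ω => vh ω - v')
    (hint.sub (integrable_const _)) hvarint hnoise_mean, hbias, neg_sq]
  gcongr
  exact one_sub_sq_mul_norm_add_sq_le hβ _ _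

/-- One-step contraction of the moving-average estimator in MOML: with
`u⁺ = (1-β)u + β v̂`, `𝔼[v̂] = v'`, `𝔼‖v̂ - v'‖² ≤ σ²`, and `β ∈ (0,1)`,
`𝔼‖v' - u⁺‖² ≤ (1-β)‖v-u‖² + (1-β)(1+1/β)‖v'-v‖² + β²σ²`. -/
theorem moving_average_one_step {Ω : Type*} [MeasurableSpace Ω] (μ : Measure Ω)
    [IsProbabilityMeasure μ] (d : ℕ) (β σ : ℝ) (hβ : β ∈ Set.Ioo (0 : ℝ) 1) (hσ : 0 ≤ σ)
    (u v v' : EuclideanSpace ℝ (Fin d)) (vh : Ω → EuclideanSpace ℝ (Fin d))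
    (hint : Integrable vh μ) (hmean : ∫ ω, vh ω ∂μ = v')
    (hvarint : Integrable (fun ω => ‖vh ω - v'‖ ^ 2) μ)
    (hvar : ∫ ω, ‖vh ω - v'‖ ^ 2 ∂μ ≤ σ ^ 2) :
    ∫ ω, ‖v' - ((1 - β) • u + β • vh ω)‖ ^ 2 ∂μ
      ≤ (1 - β) * ‖v - u‖ ^ 2 + (1 - β) * (1 + 1 / β) * ‖v' - v‖ ^ 2 + β ^ 2 * σ ^ 2 :=
  moving_average_one_step_general μ d β σ hβ u v v' vh hint hmean hvarint hvar
end
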